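/- Let M₁ > 0 and c₃ > 0, and let u : [0,T] → ℝ be a C¹ function with u(0) = u(T), ‖u‖_∞ ≤ M₁, such that t ↦ φ_{p(t)}(u'(t)) is of class C¹ and |(φ_{p(t)}(u'(t)))'| ≤ c₃(1 + |u'(t)|) for all t ∈ [0,T]. If M₂ > 1 satisfies (M₂^{p_- − 1} − (2M₁/T + 1)^{p⁺ − 1})/c₃ > T + 2M₁, then ‖u'‖_∞ < M₂. -/

import Mathlib

open Set MeasureTheory

/-- `φ_q(x) = |x|^{q-2} x` (with `φ_q(0) = 0`, automatic since `0 ^ y * 0 = 0`). -/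
noncomputable def phi (q x : ℝ) : ℝ := |x| ^ (q - 2) * x

/-- sup-norm of `v` on `[0,T]`. -/
noncomputable def supNorm (T : ℝ) (v : ℝ → ℝ) : ℝ := sSup ((fun t => |v t|) '' Set.Icc 0 T)

/-- mean value `v̄ = (1/T) ∫₀ᵀ v`. -/
noncomputable def meanVal (T : ℝ) (v : ℝ → ℝ) : ℝ := (1 / T) * ∫ t in (0:ℝ)..T, v t

/-- `v` (with derivative `v'`) is C¹ on `[0,T]`. -/
def IsC1On (T : ℝ) (v v' : ℝ → ℝ) : Prop :=
  (∀ t ∈ Set.Icc 0 T, HasDerivWithinAt v (v' t) (Set.Icc 0 T) t) ∧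
    ContinuousOn v' (Set.Icc 0 T)

/-- (classical, positive) solution of problem (P):
`(φ_{p(t)}(u'))' + f(u)u' + g(u) = h(t)` on `[0,T]`, `u(0)-u(T) = 0 = u'(0)-u'(T)`. -/
def IsSolP (T : ℝ) (p f g h u : ℝ → ℝ) : Prop :=
  ∃ u' w' : ℝ → ℝ,
    IsC1On T u u' ∧ (∀ t ∈ Set.Icc 0 T, 0 < u t) ∧
    IsC1On T (fun t => phi (p t) (u' t)) w' ∧
    u 0 = u T ∧ u' 0 = u' T ∧
    ∀ t ∈ Set.Icc 0 T, w' t + f (u t) * u' t + g (u t) = h t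

/-- lower solution of problem (P). -/
def IsLowerSol (T : ℝ) (p f g h α : ℝ → ℝ) : Prop :=
  ∃ α' w' : ℝ → ℝ,
    IsC1On T α α' ∧ (∀ t ∈ Set.Icc 0 T, 0 < α t) ∧
    IsC1On T (fun t => phi (p t) (α' t)) w' ∧
    α 0 = α T ∧ α' T ≤ α' 0 ∧
    ∀ t ∈ Set.Icc 0 T, h t ≤ w' t + f (α t) * α' t + g (α t)

/-- upper solution of problem (P). -/
def IsUpperSol (T : ℝ) (p f g h β : ℝ → ℝ) : Prop :=
  ∃ β' w' : ℝ → ℝ,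
    IsC1On T β β' ∧ (∀ t ∈ Set.Icc 0 T, 0 < β t) ∧
    IsC1On T (fun t => phi (p t) (β' t)) w' ∧
    β 0 = β T ∧ β' 0 ≤ β' T ∧
    ∀ t ∈ Set.Icc 0 T, w' t + f (β t) * β' t + g (β t) ≤ h t

/-!
By Rolle's theorem `u'` vanishes somewhere in `(0,T)`. Let `ts` be a maximum point of `|u'|` and
`t₁` the zero of `u'` nearest to `ts`. Between `t₁` and `ts` the derivative `u'` has constant sign,
so `∫ |u'| = |u ts - u t₁| ≤ 2 M₁`, and integrating `|(φ(u'))'| ≤ c₃ (1 + |u'|)` from `t₁` to `ts`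
gives `|u' ts| ^ (p ts - 1) = |φ (u' ts)| ≤ c₃ (T + 2 M₁)`. If `|u' ts| ≥ M₂ > 1`, the left side
is at least `M₂ ^ (p₋ - 1)`, contradicting the choice of `M₂`.
-/

theorem abs_phi (q : ℝ) {x : ℝ} (hx : x ≠ 0) : |phi q x| = |x| ^ (q - 1) := by
  rw [phi, abs_mul, abs_of_nonneg (Real.rpow_nonneg (abs_nonneg x) _),
    show q - 1 = q - 2 + 1 by ring, Real.rpow_add_one (abs_ne_zero.mpr hx)]

theorem rpow_le_abs_phi {M x q₀ q : ℝ} (hM : 1 ≤ M) (hMx : M ≤ |x|) (hq : 1 ≤ q) (hq₀ : q₀ ≤ q) :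
    M ^ (q₀ - 1) ≤ |phi q x| := by
  rw [abs_phi q (abs_pos.1 (by linarith))]
  calc M ^ (q₀ - 1) ≤ M ^ (q - 1) := Real.rpow_le_rpow_of_exponent_le hM (by linarith)
    _ ≤ |x| ^ (q - 1) := Real.rpow_le_rpow (by linarith) hMx (by linarith)

theorem phi_zero (q : ℝ) : phi q 0 = 0 := mul_zero _

theorem abs_le_supNorm {T : ℝ} {v : ℝ → ℝ} (hv : ContinuousOn v (Icc 0 T)) {t : ℝ}
    (ht : t ∈ Icc 0 T) : |v t| ≤ supNorm T v :=
  le_csSup (isCompact_Icc.image_of_continuousOn hv.abs).bddAbove (mem_image_of_mem _ ht)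

theorem exists_supNorm_eq {T : ℝ} {v : ℝ → ℝ} (hT : 0 ≤ T) (hv : ContinuousOn v (Icc 0 T)) :
    ∃ t ∈ Icc 0 T, supNorm T v = |v t| := by
  obtain ⟨t, ht, h⟩ :=
    (isCompact_Icc.image_of_continuousOn hv.abs).sSup_mem ((nonempty_Icc.2 hT).image _)
  exact ⟨t, ht, h.symm⟩

theorem IsC1On.continuousOn {T : ℝ} {v v' : ℝ → ℝ} (h : IsC1On T v v') :
    ContinuousOn v (Icc 0 T) :=
  fun t ht => (h.1 t ht).continuousWithinAt

theorem IsC1On.hasDerivAt {T : ℝ} {v v' : ℝ → ℝ} (h : IsC1On T v v') {t : ℝ}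
    (ht : t ∈ Ioo 0 T) : HasDerivAt v (v' t) t :=
  (h.1 t (Ioo_subset_Icc_self ht)).hasDerivAt (Icc_mem_nhds ht.1 ht.2)

theorem ContinuousOn.nonneg_or_nonpos_of_ne_zero {f : ℝ → ℝ} {a b : ℝ}
    (hf : ContinuousOn f (Icc a b)) (h0 : ∀ x ∈ Ioo a b, f x ≠ 0) :
    (∀ x ∈ Icc a b, 0 ≤ f x) ∨ ∀ x ∈ Icc a b, f x ≤ 0 := by
  by_contra! ⟨⟨x, hx, hfx⟩, y, hy, hfy⟩
  obtain ⟨z, hz, hfz⟩ := intermediate_value_uIcc (hf.mono (uIcc_subset_Icc hx hy))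
    (mem_uIcc.2 (Or.inl ⟨hfx.le, hfy.le⟩))
  have hzx : z ≠ x := by rintro rfl; linarith
  have hzy : z ≠ y := by rintro rfl; linarith
  rw [mem_uIcc] at hz
  exact h0 z ⟨by grind, by grind⟩ hfz

theorem integral_abs_eq_abs_integral_of_ne_zero {f : ℝ → ℝ} {a b : ℝ} (hab : a ≤ b)
    (hf : ContinuousOn f (Icc a b)) (h0 : ∀ x ∈ Ioo a b, f x ≠ 0) :
    ∫ x in a..b, |f x| = |∫ x in a..b, f x| := by
  have hIcc : uIcc a b = Icc a b := uIcc_of_le hab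
  rcases hf.nonneg_or_nonpos_of_ne_zero h0 with hpos | hneg
  · rw [abs_of_nonneg (intervalIntegral.integral_nonneg hab hpos)]
    exact intervalIntegral.integral_congr fun x hx => abs_of_nonneg (hpos x (hIcc ▸ hx))
  · have hneg' : 0 ≤ ∫ x in a..b, -f x :=
      intervalIntegral.integral_nonneg hab fun x hx => neg_nonneg.2 (hneg x hx)
    rw [intervalIntegral.integral_neg] at hneg'
    rw [abs_of_nonpos (neg_nonneg.1 hneg'), ← intervalIntegral.integral_neg]
    exact intervalIntegral.integral_congr fun x hx => abs_of_nonpos (hneg x (hIcc ▸ hx))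

theorem abs_sub_le_of_abs_deriv_le {u u' w w' : ℝ → ℝ} {a b c : ℝ} (hab : a ≤ b)
    (hu : ContinuousOn u (Icc a b)) (hu' : ContinuousOn u' (Icc a b))
    (hud : ∀ x ∈ Ioo a b, HasDerivAt u (u' x) x)
    (hw : ContinuousOn w (Icc a b)) (hw' : ContinuousOn w' (Icc a b))
    (hwd : ∀ x ∈ Ioo a b, HasDerivAt w (w' x) x)
    (hbound : ∀ x ∈ Icc a b, |w' x| ≤ c * (1 + |u' x|)) (h0 : ∀ x ∈ Ioo a b, u' x ≠ 0) :
    |w b - w a| ≤ c * (b - a + |u b - u a|) := by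
  have hIcc : uIcc a b = Icc a b := uIcc_of_le hab
  have hu'int : IntervalIntegrable u' volume a b := (hIcc ▸ hu').intervalIntegrable
  have hw'int : IntervalIntegrable w' volume a b := (hIcc ▸ hw').intervalIntegrable
  have hFTCu := intervalIntegral.integral_eq_sub_of_hasDerivAt_of_le hab hu hud hu'int
  have hFTCw := intervalIntegral.integral_eq_sub_of_hasDerivAt_of_le hab hw hwd hw'int
  calc |w b - w a| = |∫ x in a..b, w' x| := by rw [hFTCw]
    _ ≤ ∫ x in a..b, |w' x| := intervalIntegral.abs_integral_le_integral_abs hab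
    _ ≤ ∫ x in a..b, c * (1 + |u' x|) :=
        intervalIntegral.integral_mono_on hab hw'int.abs
          (hIcc ▸ continuousOn_const.mul (continuousOn_const.add hu'.abs)).intervalIntegrable
          hbound
    _ = c * (b - a + ∫ x in a..b, |u' x|) := by
        rw [intervalIntegral.integral_const_mul,
          intervalIntegral.integral_add intervalIntegrable_const hu'int.abs,
          intervalIntegral.integral_const, smul_eq_mul, mul_one]
    _ = c * (b - a + |u b - u a|) := by
        rw [integral_abs_eq_abs_integral_of_ne_zero hab hu' h0, hFTCu]

theorem IsC1On.abs_sub_le {T c M : ℝ} {u u' w w' : ℝ → ℝ} (hu : IsC1On T u u')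
    (hw : IsC1On T w w') (hc : 0 ≤ c) (huM : ∀ t ∈ Icc 0 T, |u t| ≤ M)
    (hbound : ∀ t ∈ Icc 0 T, |w' t| ≤ c * (1 + |u' t|)) {a b : ℝ} (ha : a ∈ Icc 0 T)
    (hb : b ∈ Icc 0 T) (h0 : ∀ x ∈ Ioo (min a b) (max a b), u' x ≠ 0) :
    |w b - w a| ≤ c * (T + 2 * M) := by
  wlog hab : a ≤ b generalizing a b
  · rw [abs_sub_comm]
    exact this hb ha (by rwa [min_comm, max_comm]) (le_of_not_ge hab)
  rw [min_eq_left hab, max_eq_right hab] at h0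
  have hsub : Icc a b ⊆ Icc 0 T := Icc_subset_Icc ha.1 hb.2
  have hsub' : Ioo a b ⊆ Ioo 0 T := Ioo_subset_Ioo ha.1 hb.2
  calc |w b - w a| ≤ c * (b - a + |u b - u a|) :=
        abs_sub_le_of_abs_deriv_le hab (hu.continuousOn.mono hsub) (hu.2.mono hsub)
          (fun x hx => hu.hasDerivAt (hsub' hx)) (hw.continuousOn.mono hsub) (hw.2.mono hsub)
          (fun x hx => hw.hasDerivAt (hsub' hx)) (fun x hx => hbound x (hsub hx)) h0
    _ ≤ c * (T + 2 * M) := by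
        gcongr
        · linarith [ha.1, hb.2]
        · linarith [abs_sub (u b) (u a), huM a ha, huM b hb]

/-- A zero of `f` nearest to `t` leaves no zero strictly between itself and `t`. -/
theorem exists_zero_forall_ne_zero_between {f : ℝ → ℝ} {a b z t : ℝ}
    (hf : ContinuousOn f (Icc a b)) (hz : z ∈ Icc a b) (hfz : f z = 0) (ht : t ∈ Icc a b) :
    ∃ t₁ ∈ Icc a b, f t₁ = 0 ∧ ∀ x ∈ Ioo (min t₁ t) (max t₁ t), f x ≠ 0 := by
  have hK : IsCompact (Icc a b ∩ f ⁻¹' {0}) :=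
    isCompact_Icc.of_isClosed_subset
      (hf.preimage_isClosed_of_isClosed isClosed_Icc isClosed_singleton) inter_subset_left
  obtain ⟨t₁, ⟨ht₁, hft₁⟩, hmin⟩ :=
    hK.exists_isMinOn ⟨z, hz, hfz⟩ (continuousOn_id.sub continuousOn_const).abs
  refine ⟨t₁, ht₁, hft₁, fun x hx hfx => ?_⟩
  have hxK : x ∈ Icc a b := ⟨by grind, by grind⟩
  have hnear : |t₁ - t| ≤ |x - t| := hmin ⟨hxK, hfx⟩
  rw [mem_Ioo, min_lt_iff, lt_max_iff] at hx
  grind [abs_of_nonneg, abs_of_nonpos]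

theorem stmt9_general (T : ℝ) (hT : 0 < T) (p : ℝ → ℝ)
    (hp : ContinuousOn p (Set.Icc 0 T)) (hp1 : ∀ t ∈ Set.Icc 0 T, 1 < p t)
    (pm pp : ℝ) (hpm : pm = sInf (p '' Set.Icc 0 T))
    (M₁ c₃ : ℝ) (hM₁pos : 0 < M₁) (hc₃ : 0 < c₃)
    (u u' w' : ℝ → ℝ)
    (hu : IsC1On T u u') (hbc : u 0 = u T)
    (husup : supNorm T u ≤ M₁)
    (hw : IsC1On T (fun t => phi (p t) (u' t)) w')
    (hbound : ∀ t ∈ Set.Icc 0 T, |w' t| ≤ c₃ * (1 + |u' t|))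
    (M₂ : ℝ) (hM₂ : 1 < M₂)
    (hM₂' : T + 2 * M₁ < (M₂ ^ (pm - 1) - (2 * M₁ / T + 1) ^ (pp - 1)) / c₃) :
    supNorm T u' < M₂ := by
  obtain ⟨ts, hts, hsup⟩ := exists_supNorm_eq hT.le hu.2
  by_contra! hM₂le
  rw [hsup] at hM₂le
  obtain ⟨t₀, ht₀, hu't₀⟩ :=
    exists_hasDerivAt_eq_zero hT hu.continuousOn hbc fun _ => hu.hasDerivAt
  obtain ⟨t₁, ht₁, hu't₁, hne⟩ :=
    exists_zero_forall_ne_zero_between hu.2 (Ioo_subset_Icc_self ht₀) hu't₀ hts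
  have hupper : |phi (p ts) (u' ts)| ≤ c₃ * (T + 2 * M₁) := by
    simpa [hu't₁, phi_zero] using
      hu.abs_sub_le hw hc₃.le (fun t ht => (abs_le_supNorm hu.continuousOn ht).trans husup)
        hbound ht₁ hts hne
  have hlower : M₂ ^ (pm - 1) ≤ |phi (p ts) (u' ts)| :=
    rpow_le_abs_phi hM₂.le hM₂le (hp1 ts hts).le <|
      hpm ▸ csInf_le (isCompact_Icc.image_of_continuousOn hp).bddBelow (mem_image_of_mem p hts)
  have hbase : 0 ≤ (2 * M₁ / T + 1) ^ (pp - 1) := by positivity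
  rw [lt_div_iff₀ hc₃] at hM₂'
  linarith

theorem stmt9 (T : ℝ) (hT : 0 < T) (p : ℝ → ℝ)
    (hp : ContinuousOn p (Set.Icc 0 T)) (hp1 : ∀ t ∈ Set.Icc 0 T, 1 < p t)
    (hpT : p 0 = p T)
    (pm pp : ℝ) (hpm : pm = sInf (p '' Set.Icc 0 T)) (hpp : pp = sSup (p '' Set.Icc 0 T))
    (M₁ c₃ : ℝ) (hM₁pos : 0 < M₁) (hc₃ : 0 < c₃)
    (u u' w' : ℝ → ℝ)
    (hu : IsC1On T u u') (hbc : u 0 = u T)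
    (husup : supNorm T u ≤ M₁)
    (hw : IsC1On T (fun t => phi (p t) (u' t)) w')
    (hbound : ∀ t ∈ Set.Icc 0 T, |w' t| ≤ c₃ * (1 + |u' t|))
    (M₂ : ℝ) (hM₂ : 1 < M₂)
    (hM₂' : T + 2 * M₁ < (M₂ ^ (pm - 1) - (2 * M₁ / T + 1) ^ (pp - 1)) / c₃) :
    supNorm T u' < M₂ :=
  stmt9_general T hT p hp hp1 pm pp hpm M₁ c₃ hM₁pos hc₃ u u' w' hu hbc husup hw hbound M₂ hM₂ hM₂'
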